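/- Define, for θ > 0, z̃₂(θ) = 6(sinh 2θ − 2θ)²/(cosh 2θ − 1)³ and w̃₀(θ) = (sinh 2θ − 2θ)(sinh 2θ)/(cosh 2θ − 1)². Then lim_{θ→0⁺} (z̃₂(θ) − 4/3)/θ² = −4/5 and lim_{θ→0⁺} (w̃₀(θ) − 2/3)/θ² = 2/15. Consequently lim_{θ→0⁺} (z̃₂(θ) − 4/3)/(w̃₀(θ) − 2/3) = −6, i.e. the k < 0 Friedmann orbit leaves the rest point SM₂ = (4/3, 2/3) tangent to the unstable eigenvector (−9, 3/2) (equivalently (−6, 1)) associated with the positive eigenvalue λ_{A1} = 2/3 of the linearization of the order n = 1 STV ODE at SM₂. -/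

import Mathlib

open Real Set Filter

/-- Leading-order density coefficient of the pressureless `k = −1` Friedmann spacetime. -/
noncomputable def z2F (θ : ℝ) : ℝ :=
  6 * (Real.sinh (2 * θ) - 2 * θ) ^ 2 / (Real.cosh (2 * θ) - 1) ^ 3

/-- Leading-order velocity coefficient of the pressureless `k = −1` Friedmann spacetime. -/
noncomputable def w0F (θ : ℝ) : ℝ :=
  (Real.sinh (2 * θ) - 2 * θ) * Real.sinh (2 * θ) / (Real.cosh (2 * θ) - 1) ^ 2

open Topology Asymptotics

/-! Put `p θ = (sinh 2θ - 2θ) / θ³` and `q θ = (cosh 2θ - 1) / θ²`. Then `z̃₂ = 6 p² / q³` and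
`w̃₀ = p (sinh 2θ / θ) / q²` with `sinh 2θ / θ = 2 + θ² p`, while the Taylor series of `exp` give
`p = 4/3 + 4θ²/15 + o(θ²)` and `q = 2 + 2θ²/3 + o(θ²)`. Expansions `a + b θ² + o(θ²)` obey the
product and quotient rules of derivatives in the variable `θ²`, which produces the coefficients
`-4/5` and `2/15`; the third limit is their quotient. -/

/-- `f = a + b t + o(t)` along `l`; meaningful when `t → 0` through nonzero values. -/
def HasFirstOrderExpansion {α : Type*} (l : Filter α) (t f : α → ℝ) (a b : ℝ) : Prop :=
  Tendsto (fun x => (f x - a) / t x) l (𝓝 b)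

namespace HasFirstOrderExpansion

variable {α : Type*} {l : Filter α} {t f g : α → ℝ} {a b c d : ℝ}

theorem tendsto (ht : Tendsto t l (𝓝[≠] 0)) (hf : HasFirstOrderExpansion l t f a b) :
    Tendsto f l (𝓝 a) := by
  obtain ⟨ht₀, ht_ne⟩ := tendsto_nhdsWithin_iff.1 ht
  have hsub : Tendsto (fun x => f x - a) l (𝓝 0) := by
    simpa using (Tendsto.mul hf ht₀).congr' <| ht_ne.mono fun x hx => by
      field_simp [show t x ≠ 0 from hx]
  exact tendsto_sub_nhds_zero_iff.1 hsub

theorem congr' (hf : HasFirstOrderExpansion l t f a b) (hfg : f =ᶠ[l] g) :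
    HasFirstOrderExpansion l t g a b :=
  Tendsto.congr' (hfg.mono fun x hx => by rw [hx]) hf

theorem const_mul (hf : HasFirstOrderExpansion l t f a b) (k : ℝ) :
    HasFirstOrderExpansion l t (fun x => k * f x) (k * a) (k * b) := by
  simpa only [HasFirstOrderExpansion, ← mul_sub, mul_div_assoc] using Tendsto.const_mul k hf

theorem mul (ht : Tendsto t l (𝓝[≠] 0)) (hf : HasFirstOrderExpansion l t f a b)
    (hg : HasFirstOrderExpansion l t g c d) :
    HasFirstOrderExpansion l t (fun x => f x * g x) (a * c) (b * c + a * d) :=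
  ((Tendsto.mul hf (hg.tendsto ht)).add (Tendsto.const_mul a hg)).congr fun x => by ring

theorem pow (ht : Tendsto t l (𝓝[≠] 0)) (hf : HasFirstOrderExpansion l t f a b) (n : ℕ) :
    HasFirstOrderExpansion l t (fun x => f x ^ (n + 1)) (a ^ (n + 1)) ((n + 1) * a ^ n * b) := by
  induction n with
  | zero => simpa using hf
  | succ n ih =>
    convert ih.mul ht hf using 1
    · simp only [pow_succ]
    · ring
    · push_cast; ring

theorem inv (ht : Tendsto t l (𝓝[≠] 0)) (hf : HasFirstOrderExpansion l t f a b) (ha : a ≠ 0) :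
    HasFirstOrderExpansion l t (fun x => (f x)⁻¹) a⁻¹ (-b / a ^ 2) := by
  have hfa := hf.tendsto ht
  have h : Tendsto (fun x => -((f x - a) / t x) / (f x * a)) l (𝓝 (-b / a ^ 2)) := by
    rw [sq]; exact (Tendsto.neg hf).div (hfa.mul_const a) (mul_ne_zero ha ha)
  refine h.congr' ?_
  filter_upwards [hfa.eventually_ne ha] with x hx
  field_simp
  ring

theorem div (ht : Tendsto t l (𝓝[≠] 0)) (hf : HasFirstOrderExpansion l t f a b)
    (hg : HasFirstOrderExpansion l t g c d) (hc : c ≠ 0) :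
    HasFirstOrderExpansion l t (fun x => f x / g x) (a / c) ((b * c - a * d) / c ^ 2) := by
  simp only [div_eq_mul_inv]
  convert hf.mul ht (hg.inv ht hc) using 1
  field_simp
  ring

end HasFirstOrderExpansion

theorem isLittleO_comp_const_mul {f : ℝ → ℝ} {n : ℕ} (hf : f =o[𝓝 0] (· ^ n)) (k : ℝ) :
    (fun x => f (k * x)) =o[𝓝 0] (· ^ n) := by
  have hk : Tendsto (fun x => k * x) (𝓝 0) (𝓝 0) :=
    (continuous_const_mul k).tendsto' 0 0 (mul_zero k)
  refine (hf.comp_tendsto hk).trans_isBigO ?_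
  exact ((isBigO_refl (· ^ n) _).const_mul_left (k ^ n)).congr_left fun x => (mul_pow k x n).symm

theorem sinh_sub_taylor_isLittleO :
    (fun x => sinh x - (x + x ^ 3 / 6 + x ^ 5 / 120)) =o[𝓝 0] (· ^ 5) := by
  have he := exp_sub_sum_range_succ_isLittleO_pow 5
  refine ((he.sub (isLittleO_comp_const_mul he (-1))).const_mul_left (1 / 2)).congr_left
    fun x => ?_
  simp only [sinh_eq, Finset.sum_range_succ, Finset.sum_range_zero, Nat.factorial, neg_one_mul]
  push_cast
  ring

theorem cosh_sub_taylor_isLittleO :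
    (fun x => cosh x - (1 + x ^ 2 / 2 + x ^ 4 / 24)) =o[𝓝 0] (· ^ 4) := by
  have he := exp_sub_sum_range_succ_isLittleO_pow 4
  refine ((he.add (isLittleO_comp_const_mul he (-1))).const_mul_left (1 / 2)).congr_left
    fun x => ?_
  simp only [cosh_eq, Finset.sum_range_succ, Finset.sum_range_zero, Nat.factorial, neg_one_mul]
  push_cast
  ring

theorem tendsto_sq_nhdsNE_zero : Tendsto (fun θ : ℝ => θ ^ 2) (𝓝[≠] 0) (𝓝[≠] 0) :=
  tendsto_nhdsWithin_iff.2
    ⟨((continuous_pow 2).tendsto' 0 0 (by simp)).mono_left nhdsWithin_le_nhds,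
      eventually_mem_nhdsWithin.mono fun _ hθ => pow_ne_zero 2 hθ⟩

theorem hasFirstOrderExpansion_sinh_two_mul_sub :
    HasFirstOrderExpansion (𝓝[≠] 0) (· ^ 2) (fun θ => (sinh (2 * θ) - 2 * θ) / θ ^ 3)
      (4 / 3) (4 / 15) := by
  have h := (((isLittleO_comp_const_mul sinh_sub_taylor_isLittleO 2).tendsto_div_nhds_zero
    ).mono_left (nhdsWithin_le_nhds (s := {0}ᶜ))).add_const (4 / 15)
  rw [zero_add] at h
  refine h.congr' ?_
  filter_upwards [self_mem_nhdsWithin] with θ (hθ : θ ≠ 0)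
  field_simp
  ring

theorem hasFirstOrderExpansion_cosh_two_mul_sub_one :
    HasFirstOrderExpansion (𝓝[≠] 0) (· ^ 2) (fun θ => (cosh (2 * θ) - 1) / θ ^ 2)
      2 (2 / 3) := by
  have h := (((isLittleO_comp_const_mul cosh_sub_taylor_isLittleO 2).tendsto_div_nhds_zero
    ).mono_left (nhdsWithin_le_nhds (s := {0}ᶜ))).add_const (2 / 3)
  rw [zero_add] at h
  refine h.congr' ?_
  filter_upwards [self_mem_nhdsWithin] with θ (hθ : θ ≠ 0)
  field_simp
  ring

theorem hasFirstOrderExpansion_sinh_two_mul_div :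
    HasFirstOrderExpansion (𝓝[≠] 0) (· ^ 2) (fun θ => sinh (2 * θ) / θ) 2 (4 / 3) := by
  refine (hasFirstOrderExpansion_sinh_two_mul_sub.tendsto tendsto_sq_nhdsNE_zero).congr' ?_
  filter_upwards [self_mem_nhdsWithin] with θ (hθ : θ ≠ 0)
  field_simp

theorem z2F_eq_of_ne_zero {θ : ℝ} (hθ : θ ≠ 0) :
    z2F θ = 6 * ((sinh (2 * θ) - 2 * θ) / θ ^ 3) ^ 2 / ((cosh (2 * θ) - 1) / θ ^ 2) ^ 3 := by
  have hc : cosh (2 * θ) - 1 ≠ 0 := sub_ne_zero.2 (one_lt_cosh.2 (by simpa using hθ)).ne'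
  rw [z2F]
  field_simp

theorem w0F_eq_of_ne_zero {θ : ℝ} (hθ : θ ≠ 0) :
    w0F θ = (sinh (2 * θ) - 2 * θ) / θ ^ 3 * (sinh (2 * θ) / θ) /
      ((cosh (2 * θ) - 1) / θ ^ 2) ^ 2 := by
  have hc : cosh (2 * θ) - 1 ≠ 0 := sub_ne_zero.2 (one_lt_cosh.2 (by simpa using hθ)).ne'
  rw [w0F]
  field_simp

theorem hasFirstOrderExpansion_z2F :
    HasFirstOrderExpansion (𝓝[≠] 0) (· ^ 2) z2F (4 / 3) (-4 / 5) := by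
  have ht := tendsto_sq_nhdsNE_zero
  have h := ((hasFirstOrderExpansion_sinh_two_mul_sub.pow ht 1).const_mul 6).div ht
    (hasFirstOrderExpansion_cosh_two_mul_sub_one.pow ht 2) (by norm_num)
  convert h.congr' (eventually_mem_nhdsWithin.mono fun θ hθ => (z2F_eq_of_ne_zero hθ).symm)
    using 1 <;> norm_num

theorem hasFirstOrderExpansion_w0F :
    HasFirstOrderExpansion (𝓝[≠] 0) (· ^ 2) w0F (2 / 3) (2 / 15) := by
  have ht := tendsto_sq_nhdsNE_zero
  have h := (hasFirstOrderExpansion_sinh_two_mul_sub.mul ht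
    hasFirstOrderExpansion_sinh_two_mul_div).div ht
    (hasFirstOrderExpansion_cosh_two_mul_sub_one.pow ht 1) (by norm_num)
  convert h.congr' (eventually_mem_nhdsWithin.mono fun θ hθ => (w0F_eq_of_ne_zero hθ).symm)
    using 1 <;> norm_num

/-- The `k < 0` Friedmann orbit leaves `SM₂ = (4/3, 2/3)` tangent to the unstable
eigenvector `(−9, 3/2)` (equivalently `(−6, 1)`) of the linearization at `SM₂`. -/
theorem k_neg_orbit_tangent_to_unstable_eigenvector :
    Tendsto (fun θ => (z2F θ - 4 / 3) / θ ^ 2) (nhdsWithin 0 (Ioi 0))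
      (nhds (-4 / 5 : ℝ)) ∧
    Tendsto (fun θ => (w0F θ - 2 / 3) / θ ^ 2) (nhdsWithin 0 (Ioi 0))
      (nhds (2 / 15 : ℝ)) ∧
    Tendsto (fun θ => (z2F θ - 4 / 3) / (w0F θ - 2 / 3)) (nhdsWithin 0 (Ioi 0))
      (nhds (-6 : ℝ)) := by
  have hle : 𝓝[>] (0 : ℝ) ≤ 𝓝[≠] 0 := nhdsWithin_mono _ fun _ hθ => ne_of_gt hθ
  have hz := Tendsto.mono_left hasFirstOrderExpansion_z2F hle
  have hw := Tendsto.mono_left hasFirstOrderExpansion_w0F hle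
  refine ⟨hz, hw, ?_⟩
  convert (hz.div hw (by norm_num)).congr' ?_ using 2
  · norm_num
  filter_upwards [self_mem_nhdsWithin] with θ (hθ : 0 < θ)
  exact div_div_div_cancel_right₀ (pow_ne_zero 2 hθ.ne') _ _
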